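/- arXiv:1212.5797 — 2 statements merged into one kernel-verified Lean document; each statement's English description precedes it below -/
import Mathlib

section
/- Let 0 < β < √(log 2 / 2). For X standard Gaussian set Y_N = (exp(β√N X) - exp(Nβ^2/2))/exp(Nβ^2) and, for a sequence t_N → ∞ with t_N = o(√N), Y_N^t = Y_N · 1{Y_N ≤ 2^{N/2}/t_N}. Then E[(Y_N^t)^2] → 1 as N → ∞. -/
open MeasureTheory ProbabilityTheory Filter Real Asymptotics

lemma gauss_pdf_shift (c x : ℝ) :
    Real.exp (c * x) * gaussianPDFReal 0 1 x = Real.exp (c ^ 2 / 2) * gaussianPDFReal c 1 x := by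
  simp only [gaussianPDFReal, NNReal.coe_one, mul_one]
  rw [mul_comm (Real.exp (c*x)), mul_assoc, ← Real.exp_add,
    show -(x - 0) ^ 2 / 2 + c * x = c^2/2 + -(x-c)^2/2 by ring, Real.exp_add]
  ring

lemma gauss_density_eq : gaussianReal 0 1 =
    (volume : Measure ℝ).withDensity (fun x => ((gaussianPDFReal 0 1 x).toNNReal : ENNReal)) := by
  rw [gaussianReal_of_var_ne_zero 0 one_ne_zero]
  rfl

lemma integral_gauss_eq (g : ℝ → ℝ) :
    ∫ x, g x ∂(gaussianReal 0 1) = ∫ x, gaussianPDFReal 0 1 x * g x := by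
  rw [gauss_density_eq, integral_withDensity_eq_integral_smul
    (measurable_gaussianPDFReal 0 1).real_toNNReal]
  congr 1
  ext x
  simp [NNReal.smul_def, Real.coe_toNNReal _ (gaussianPDFReal_nonneg 0 1 x)]

lemma integrable_gauss_iff (g : ℝ → ℝ) :
    Integrable g (gaussianReal 0 1) ↔
      Integrable (fun x => g x * gaussianPDFReal 0 1 x) volume := by
  rw [gauss_density_eq, integrable_withDensity_iff
    ((measurable_gaussianPDFReal 0 1).real_toNNReal.coe_nnreal_ennreal) (by simp)]
  simp only [ENNReal.coe_toReal, Real.coe_toNNReal _ (gaussianPDFReal_nonneg 0 1 _)]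

lemma integrable_exp_gauss (c : ℝ) :
    Integrable (fun x => Real.exp (c * x)) (gaussianReal 0 1) := by
  rw [integrable_gauss_iff]
  have : (fun x => Real.exp (c * x) * gaussianPDFReal 0 1 x)
      = fun x => Real.exp (c ^ 2 / 2) * gaussianPDFReal c 1 x := by
    ext x; exact gauss_pdf_shift c x
  rw [this]
  exact (integrable_gaussianPDFReal c 1).const_mul _

lemma integral_exp_gauss (c : ℝ) :
    ∫ x, Real.exp (c * x) ∂(gaussianReal 0 1) = Real.exp (c ^ 2 / 2) := by
  rw [integral_gauss_eq]
  simp_rw [mul_comm (gaussianPDFReal 0 1 _), gauss_pdf_shift]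
  rw [MeasureTheory.integral_const_mul, integral_gaussianPDFReal_eq_one c one_ne_zero, mul_one]

/-- The normalized exponential variable as a function on `ℝ`. -/
noncomputable def bklYf (β : ℝ) (N : ℕ) (x : ℝ) : ℝ :=
  (Real.exp (β * Real.sqrt N * x) - Real.exp (N * β ^ 2 / 2)) / Real.exp (N * β ^ 2)

/-- The truncated square. -/
noncomputable def bklF (β : ℝ) (t : ℕ → ℝ) (N : ℕ) (x : ℝ) : ℝ :=
  (if bklYf β N x ≤ (2:ℝ) ^ ((N:ℝ)/2) / t N then bklYf β N x else 0) ^ 2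

/-- The tail part. -/
noncomputable def bklInd (β : ℝ) (t : ℕ → ℝ) (N : ℕ) (x : ℝ) : ℝ :=
  if (2:ℝ) ^ ((N:ℝ)/2) / t N < bklYf β N x then bklYf β N x ^ 2 else 0

lemma bklYf_measurable (β : ℝ) (N : ℕ) : Measurable (bklYf β N) := by
  unfold bklYf; fun_prop

lemma bklF_measurable (β : ℝ) (t : ℕ → ℝ) (N : ℕ) : Measurable (bklF β t N) := by
  unfold bklF
  exact (Measurable.ite (measurableSet_le (bklYf_measurable β N) measurable_const)
    (bklYf_measurable β N) measurable_const).pow_const 2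

lemma bklInd_measurable (β : ℝ) (t : ℕ → ℝ) (N : ℕ) : Measurable (bklInd β t N) := by
  unfold bklInd
  exact Measurable.ite (measurableSet_lt measurable_const (bklYf_measurable β N))
    ((bklYf_measurable β N).pow_const 2) measurable_const

lemma bklF_eq (β : ℝ) (t : ℕ → ℝ) (N : ℕ) (x : ℝ) :
    bklF β t N x = bklYf β N x ^ 2 - bklInd β t N x := by
  by_cases h : bklYf β N x ≤ (2:ℝ) ^ ((N:ℝ)/2) / t N
  · simp [bklF, bklInd, h, not_lt.mpr h]
  · simp [bklF, bklInd, h, not_le.mp h]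

lemma bklInd_nonneg (β : ℝ) (t : ℕ → ℝ) (N : ℕ) (x : ℝ) : 0 ≤ bklInd β t N x := by
  unfold bklInd; split_ifs
  · exact sq_nonneg _
  · exact le_rfl

lemma exp_sq (y : ℝ) : Real.exp y ^ 2 = Real.exp (2 * y) := by
  rw [sq, ← Real.exp_add]; ring_nf

lemma bklYf_sq_expand (β : ℝ) (N : ℕ) (x : ℝ) :
    bklYf β N x ^ 2 =
      (Real.exp (N*β^2) ^ 2)⁻¹ * Real.exp ((2*(β*Real.sqrt N)) * x)
        + ((-2*Real.exp (N*β^2/2) / Real.exp (N*β^2)^2) * Real.exp ((β*Real.sqrt N) * x)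
          + Real.exp (N*β^2/2)^2 / Real.exp (N*β^2)^2) := by
  unfold bklYf
  rw [div_pow, sub_sq, exp_sq (β * Real.sqrt N * x),
    show 2*(β*Real.sqrt N)*x = 2*(β*Real.sqrt N*x) by ring]
  field_simp
  ring

lemma bklYf_sq_integrable (β : ℝ) (N : ℕ) :
    Integrable (fun x => bklYf β N x ^ 2) (gaussianReal 0 1) := by
  have : (fun x => bklYf β N x ^ 2) = fun x =>
      (Real.exp (N*β^2) ^ 2)⁻¹ * Real.exp ((2*(β*Real.sqrt N)) * x)
        + ((-2*Real.exp (N*β^2/2) / Real.exp (N*β^2)^2) * Real.exp ((β*Real.sqrt N) * x)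
          + Real.exp (N*β^2/2)^2 / Real.exp (N*β^2)^2) := funext (bklYf_sq_expand β N)
  rw [this]
  exact ((integrable_exp_gauss _).const_mul _).add
    (((integrable_exp_gauss _).const_mul _).add (integrable_const _))

lemma bklYf_sq_integral (β : ℝ) (N : ℕ) :
    ∫ x, bklYf β N x ^ 2 ∂(gaussianReal 0 1) = 1 - Real.exp (-((N:ℝ)*β^2)) := by
  have hfe : (fun x => bklYf β N x ^ 2) = fun x =>
      (Real.exp (N*β^2) ^ 2)⁻¹ * Real.exp ((2*(β*Real.sqrt N)) * x)
        + ((-2*Real.exp (N*β^2/2) / Real.exp (N*β^2)^2) * Real.exp ((β*Real.sqrt N) * x)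
          + Real.exp (N*β^2/2)^2 / Real.exp (N*β^2)^2) := funext (bklYf_sq_expand β N)
  have iA : Integrable (fun x => (Real.exp ((N:ℝ)*β^2) ^ 2)⁻¹ *
      Real.exp ((2*(β*Real.sqrt N)) * x)) (gaussianReal 0 1) :=
    (integrable_exp_gauss _).const_mul _
  have iB : Integrable (fun x => (-2*Real.exp ((N:ℝ)*β^2/2) / Real.exp ((N:ℝ)*β^2)^2) *
      Real.exp ((β*Real.sqrt N) * x)) (gaussianReal 0 1) :=
    (integrable_exp_gauss _).const_mul _
  have iC : Integrable (fun _ : ℝ => Real.exp ((N:ℝ)*β^2/2)^2 / Real.exp ((N:ℝ)*β^2)^2)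
      (gaussianReal 0 1) := integrable_const _
  have iBC : Integrable (fun x => (-2*Real.exp ((N:ℝ)*β^2/2) / Real.exp ((N:ℝ)*β^2)^2) *
      Real.exp ((β*Real.sqrt N) * x)
        + Real.exp ((N:ℝ)*β^2/2)^2 / Real.exp ((N:ℝ)*β^2)^2) (gaussianReal 0 1) := iB.add iC
  rw [hfe, integral_add iA iBC, integral_add iB iC,
    MeasureTheory.integral_const_mul, MeasureTheory.integral_const_mul,
    integral_exp_gauss, integral_exp_gauss, integral_const]
  have ha2 : (β * Real.sqrt N)^2 = (N:ℝ) * β^2 := by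
    rw [mul_pow, Real.sq_sqrt (Nat.cast_nonneg N)]; ring
  have h1 : (2*(β*Real.sqrt N))^2/2 = 2*((N:ℝ)*β^2) := by
    rw [mul_pow, ha2]; ring
  rw [h1, show (β*Real.sqrt N)^2/2 = ((N:ℝ)*β^2)/2 by rw [ha2]]
  simp only [measure_univ, probReal_univ, ENNReal.toReal_one, smul_eq_mul, one_mul]
  set E := Real.exp ((N:ℝ)*β^2/2) with hE
  have hEpos : 0 < E := Real.exp_pos _
  have e1 : Real.exp ((N:ℝ)*β^2) = E^2 := by
    rw [hE, exp_sq]; ring_nf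
  have e2 : Real.exp (2*((N:ℝ)*β^2)) = E^2*E^2 := by
    rw [← e1, ← Real.exp_add]; ring_nf
  have e3 : Real.exp (-((N:ℝ)*β^2)) = (E^2)⁻¹ := by
    rw [Real.exp_neg, e1]
  rw [e1, e2, e3]
  field_simp
  ring

lemma bklInd_integrable (β : ℝ) (t : ℕ → ℝ) (N : ℕ) :
    Integrable (bklInd β t N) (gaussianReal 0 1) := by
  refine (bklYf_sq_integrable β N).mono'
    (bklInd_measurable β t N).aestronglyMeasurable ?_
  filter_upwards with x
  rw [Real.norm_eq_abs, abs_of_nonneg (bklInd_nonneg β t N x)]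
  unfold bklInd; split_ifs
  · exact le_rfl
  · exact sq_nonneg _

set_option maxHeartbeats 1000000 in
theorem truncated_second_moment_subcritical
    {Ω : Type*} [MeasureSpace Ω] [IsProbabilityMeasure (ℙ : Measure Ω)]
    (β : ℝ) (hβ : 0 < β) (hβ' : β < Real.sqrt (Real.log 2 / 2))
    (t : ℕ → ℝ) (ht : Tendsto t atTop atTop)
    (ho : t =o[atTop] (fun N : ℕ => Real.sqrt N))
    (X : Ω → ℝ) (hlaw : Measure.map X ℙ = gaussianReal 0 1)
    (Y : ℕ → Ω → ℝ)
    (hY : ∀ N ω, Y N ω =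
      (Real.exp (β * Real.sqrt N * X ω) - Real.exp (N * β ^ 2 / 2)) / Real.exp (N * β ^ 2))
    (Yt : ℕ → Ω → ℝ)
    (hYt : ∀ N ω, Yt N ω =
      if Y N ω ≤ (2 : ℝ) ^ ((N : ℝ) / 2) / t N then Y N ω else 0) :
    Tendsto (fun N : ℕ => ∫ ω, (Yt N ω) ^ 2) atTop (nhds 1) := by
  have hX : AEMeasurable X ℙ := by
    by_contra h
    rw [Measure.map_of_not_aemeasurable h] at hlaw
    exact (IsProbabilityMeasure.ne_zero (gaussianReal 0 1)) hlaw.symm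
  obtain ⟨δ, hδdef⟩ : ∃ y : ℝ, y = Real.log 2 / 2 - β^2 := ⟨_, rfl⟩
  have hδ : 0 < δ := by
    have := (Real.lt_sqrt hβ.le).mp hβ'
    rw [hδdef]
    linarith
  obtain ⟨ε, hεdef⟩ : ∃ y : ℝ, y = δ / (2*β) := ⟨_, rfl⟩
  have hεpos : 0 < ε := hεdef ▸ div_pos hδ (by positivity)
  -- Step A + E : exact expression of the integral
  have key : ∀ N, ∫ ω, (Yt N ω)^2 =
      (1 - Real.exp (-((N:ℝ)*β^2))) - ∫ x, bklInd β t N x ∂(gaussianReal 0 1) := by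
    intro N
    have h1 : ∀ ω, (Yt N ω)^2 = bklF β t N (X ω) := by
      intro ω
      rw [hYt, hY]; rfl
    have h2 : ∫ ω, (Yt N ω)^2 = ∫ x, bklF β t N x ∂(gaussianReal 0 1) := by
      simp_rw [h1]
      rw [← hlaw, integral_map hX (bklF_measurable β t N).aestronglyMeasurable]
    rw [h2, show (fun x => bklF β t N x) = fun x => bklYf β N x ^ 2 - bklInd β t N x from
      funext (bklF_eq β t N),
      integral_sub (bklYf_sq_integrable β N) (bklInd_integrable β t N),
      bklYf_sq_integral]
  -- tail bound, eventually
  have tail : ∀ᶠ N : ℕ in atTop,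
      ∫ x, bklInd β t N x ∂(gaussianReal 0 1) ≤ Real.exp (-(ε^2 * N)/2) := by
    have he1 : ∀ᶠ N : ℕ in atTop, 1 ≤ t N := ht.eventually_ge_atTop 1
    have he2 : ∀ᶠ N : ℕ in atTop, ‖t N‖ ≤ 1 * ‖Real.sqrt N‖ := ho.def one_pos
    have he3 : ∀ᶠ N : ℕ in atTop, (2/δ)^2 ≤ (N:ℝ) :=
      tendsto_natCast_atTop_atTop.eventually_ge_atTop _
    have he4 : ∀ᶠ N : ℕ in atTop, 1 ≤ N := eventually_ge_atTop 1
    filter_upwards [he1, he2, he3, he4] with N ht1 ht2 hN2 hN1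
    have htpos : (0:ℝ) < t N := lt_of_lt_of_le zero_lt_one ht1
    have hNr : (0:ℝ) < (N:ℝ) := by exact_mod_cast hN1
    have hsqpos : 0 < Real.sqrt N := Real.sqrt_pos.mpr hNr
    have hss : Real.sqrt N * Real.sqrt N = (N:ℝ) := Real.mul_self_sqrt (Nat.cast_nonneg N)
    obtain ⟨a, hadef⟩ : ∃ y, y = β * Real.sqrt N := ⟨_, rfl⟩
    have hapos : 0 < a := hadef ▸ mul_pos hβ hsqpos
    have ha2 : a^2 = (N:ℝ)*β^2 := by
      rw [hadef, mul_pow, Real.sq_sqrt (Nat.cast_nonneg N)]; ring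
    obtain ⟨b, hbdef⟩ : ∃ y, y = ((N:ℝ)*Real.log 2/2 - Real.log (t N) + (N:ℝ)*β^2) / a :=
      ⟨_, rfl⟩
    have hab : a * b = (N:ℝ)*Real.log 2/2 - Real.log (t N) + (N:ℝ)*β^2 := by
      rw [hbdef, mul_comm]; exact div_mul_cancel₀ _ (ne_of_gt hapos)
    obtain ⟨s, hsdef⟩ : ∃ y, y = b - 2*a := ⟨_, rfl⟩
    have hts : t N ≤ Real.sqrt N := by
      rw [Real.norm_eq_abs, Real.norm_eq_abs, one_mul, abs_of_pos htpos,
        abs_of_nonneg (Real.sqrt_nonneg _)] at ht2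
      exact ht2
    have hlogt0 : 0 ≤ Real.log (t N) := Real.log_nonneg ht1
    have hlogt : Real.log (t N) ≤ (N:ℝ)*δ/2 := by
      have h1 : Real.log (t N) ≤ Real.sqrt N := by
        have := Real.log_le_sub_one_of_pos htpos
        linarith
      have h3 : 2/δ ≤ Real.sqrt N := by
        nlinarith [hss, Real.sqrt_nonneg (N:ℝ), hN2]
      have h6 := mul_le_mul_of_nonneg_right h3 (mul_nonneg hδ.le hsqpos.le)
      have e1 : (2/δ)*(δ*Real.sqrt N) = 2*Real.sqrt N := by field_simp
      have e2 : Real.sqrt N*(δ*Real.sqrt N) = δ*(N:ℝ) := by linear_combination δ * hss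
      rw [e1, e2] at h6
      have hc : δ*(N:ℝ) = (N:ℝ)*δ := mul_comm _ _
      have h2 : Real.sqrt N ≤ (N:ℝ)*δ/2 := by linarith
      linarith
    have hsε : ε * Real.sqrt N ≤ s := by
      have h1 : a * s = (N:ℝ)*δ - Real.log (t N) := by
        rw [hsdef, mul_sub, hab, hδdef]
        linear_combination (-2:ℝ)*ha2
      have h2 : a * (ε * Real.sqrt N) = (N:ℝ)*δ/2 := by
        rw [hadef, hεdef]
        field_simp
        linear_combination hss
      have h3 : a * (ε * Real.sqrt N) ≤ a * s := by
        rw [h1, h2]; linarith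
      exact le_of_mul_le_mul_left h3 hapos
    have hs0 : 0 ≤ s := le_trans (by positivity) hsε
    obtain ⟨C, hCdef⟩ : ∃ y, y = Real.exp (-(s*b) - 2*((N:ℝ)*β^2)) := ⟨_, rfl⟩
    have hpt : ∀ x, bklInd β t N x ≤ C * Real.exp ((2*a+s)*x) := by
      intro x
      unfold bklInd
      split_ifs with h
      · have hyf0 : 0 < bklYf β N x :=
          lt_trans (div_pos (Real.rpow_pos_of_pos two_pos _) htpos) h
        have hMpos : 0 < Real.exp ((N:ℝ)*β^2) := Real.exp_pos _
        have hmpos : 0 < Real.exp ((N:ℝ)*β^2/2) := Real.exp_pos _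
        unfold bklYf at h hyf0
        rw [← hadef] at h hyf0
        have hcutM : Real.exp (a*b) = (2:ℝ)^((N:ℝ)/2)/t N * Real.exp ((N:ℝ)*β^2) := by
          rw [hab, show (N:ℝ)*Real.log 2/2 - Real.log (t N) + (N:ℝ)*β^2
              = (Real.log 2 * ((N:ℝ)/2) + (N:ℝ)*β^2) - Real.log (t N) by ring,
            Real.exp_sub, Real.exp_add, Real.exp_log htpos,
            ← Real.rpow_def_of_pos two_pos]
          ring
        have h' : (2:ℝ)^((N:ℝ)/2)/t N * Real.exp ((N:ℝ)*β^2)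
            < Real.exp (a*x) - Real.exp ((N:ℝ)*β^2/2) := (lt_div_iff₀ hMpos).mp h
        have hEb : Real.exp (a*b) < Real.exp (a*x) := by
          rw [hcutM]; nlinarith
        have hbx : b ≤ x := by
          have h5 : a*b < a*x := Real.exp_lt_exp.mp hEb
          exact le_of_lt (lt_of_mul_lt_mul_left h5 hapos.le)
        have hyfle : (Real.exp (a*x) - Real.exp ((N:ℝ)*β^2/2)) / Real.exp ((N:ℝ)*β^2)
            ≤ Real.exp (a*x) / Real.exp ((N:ℝ)*β^2) := by
          gcongr
          linarith
        have hsq : ((Real.exp (a*x) - Real.exp ((N:ℝ)*β^2/2)) / Real.exp ((N:ℝ)*β^2)) ^ 2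
            ≤ (Real.exp (a*x) / Real.exp ((N:ℝ)*β^2))^2 :=
          pow_le_pow_left₀ hyf0.le hyfle 2
        have hgoal : bklYf β N x ^ 2 ≤ (Real.exp (a*x) / Real.exp ((N:ℝ)*β^2))^2 := by
          unfold bklYf
          rw [← hadef]
          exact hsq
        refine hgoal.trans ?_
        rw [div_pow, exp_sq (a*x), exp_sq ((N:ℝ)*β^2), ← Real.exp_sub, hCdef,
          ← Real.exp_add]
        exact Real.exp_le_exp.mpr (by nlinarith [mul_nonneg hs0 (sub_nonneg.mpr hbx)])
      · rw [hCdef]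
        positivity
    have hint : ∫ x, bklInd β t N x ∂(gaussianReal 0 1)
        ≤ ∫ x, C * Real.exp ((2*a+s)*x) ∂(gaussianReal 0 1) := by
      refine integral_mono_of_nonneg ?_ ((integrable_exp_gauss _).const_mul _) ?_
      · filter_upwards with x
        exact bklInd_nonneg β t N x
      · filter_upwards with x
        exact hpt x
    rw [MeasureTheory.integral_const_mul, integral_exp_gauss] at hint
    refine hint.trans ?_
    rw [hCdef, ← Real.exp_add]
    apply Real.exp_le_exp.mpr
    have hexp : -(s*b) - 2*((N:ℝ)*β^2) + (2*a+s)^2/2 = -(s^2)/2 := by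
      rw [hsdef, ← ha2]; ring
    rw [hexp]
    have h6 : ε^2 * (N:ℝ) ≤ s^2 := by
      have h4 : (ε*Real.sqrt N)^2 ≤ s^2 := pow_le_pow_left₀ (by positivity) hsε 2
      rw [mul_pow, Real.sq_sqrt (Nat.cast_nonneg N)] at h4
      exact h4
    linarith
  -- limits
  have l1 : Tendsto (fun N : ℕ => 1 - Real.exp (-((N:ℝ)*β^2))) atTop (nhds 1) := by
    have h0 : Tendsto (fun N : ℕ => (N:ℝ)*β^2) atTop atTop :=
      tendsto_natCast_atTop_atTop.atTop_mul_const (by positivity)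
    have h1 : Tendsto (fun N : ℕ => Real.exp (-((N:ℝ)*β^2))) atTop (nhds 0) :=
      Real.tendsto_exp_atBot.comp (tendsto_neg_atBot_iff.mpr h0)
    simpa using tendsto_const_nhds.sub h1
  have l2 : Tendsto (fun N : ℕ => ∫ x, bklInd β t N x ∂(gaussianReal 0 1)) atTop (nhds 0) := by
    have hub : Tendsto (fun N : ℕ => Real.exp (-(ε^2 * N)/2)) atTop (nhds 0) := by
      have h0 : Tendsto (fun N : ℕ => ε^2 * (N:ℝ)) atTop atTop :=
        tendsto_natCast_atTop_atTop.const_mul_atTop (by positivity)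
      exact Real.tendsto_exp_atBot.comp
        ((tendsto_neg_atBot_iff.mpr h0).atBot_div_const two_pos)
    refine tendsto_of_tendsto_of_tendsto_of_le_of_le' tendsto_const_nhds hub ?_ tail
    filter_upwards with N
    exact integral_nonneg (bklInd_nonneg β t N)
  have := l1.sub l2
  rw [sub_zero] at this
  exact this.congr (fun N => (key N).symm)
end

section
/- Let β = √(log 2 / 2). For X standard Gaussian set Y_N = (exp(β√N X) - exp(Nβ^2/2))/exp(Nβ^2) and, for a sequence t_N → ∞ with t_N = o(√(log N)), Y_N^t = Y_N · 1{Y_N ≤ 2^{N/2}/t_N}. Then E[(Y_N^t)^2] → 1/2 as N → ∞. -/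
open MeasureTheory ProbabilityTheory Filter Real Asymptotics
open Set
open scoped ENNReal NNReal


noncomputable def gPhi (b : ℝ) : ℝ := ((gaussianReal 0 1) (Set.Iic b)).toReal

lemma gPhi_eq_integral (b : ℝ) : gPhi b = ∫ x in Set.Iic b, gaussianPDFReal 0 1 x := by
  rw [gPhi, gaussianReal_apply_eq_integral 0 one_ne_zero, ENNReal.toReal_ofReal]
  exact setIntegral_nonneg measurableSet_Iic fun x _ => gaussianPDFReal_nonneg _ _ _

lemma gPhi_nonneg (b : ℝ) : 0 ≤ gPhi b := ENNReal.toReal_nonneg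

lemma gPhi_le_one (b : ℝ) : gPhi b ≤ 1 := by
  rw [gPhi]
  have h := prob_le_one (μ := gaussianReal 0 1) (s := Set.Iic b)
  exact ENNReal.toReal_le_of_le_ofReal one_pos.le (by simpa using h)

lemma gaussianPDFReal_le_one (x : ℝ) : gaussianPDFReal 0 1 x ≤ 1 := by
  rw [gaussianPDFReal]
  have h1 : (1:ℝ) ≤ √(2 * π * (1:NNReal)) := by
    rw [show ((1:NNReal):ℝ) = 1 by norm_num, mul_one, show (1:ℝ) = √1 by simp]
    exact Real.sqrt_le_sqrt (by nlinarith [Real.pi_gt_three])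
  have h2 : rexp (-(x - 0)^2 / (2 * (1:NNReal))) ≤ 1 := by
    apply Real.exp_le_one_iff.mpr
    apply div_nonpos_of_nonpos_of_nonneg (neg_nonpos.mpr (sq_nonneg _)) (by positivity)
  exact mul_le_one₀ (inv_le_one_of_one_le₀ h1) (Real.exp_nonneg _) h2

lemma gPhi_lipschitz {a b : ℝ} (hab : a ≤ b) : gPhi b - gPhi a ≤ b - a := by
  rw [gPhi_eq_integral, gPhi_eq_integral,
    ← Set.Iic_union_Ioc_eq_Iic hab,
    setIntegral_union (Set.Iic_disjoint_Ioc le_rfl) measurableSet_Ioc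
      ((integrable_gaussianPDFReal 0 1).restrict) ((integrable_gaussianPDFReal 0 1).restrict)]
  have : ∫ x in Set.Ioc a b, gaussianPDFReal 0 1 x ≤ ∫ _ in Set.Ioc a b, (1:ℝ) := by
    apply setIntegral_mono_on ((integrable_gaussianPDFReal 0 1).restrict)
      (integrableOn_const (by simp))
      measurableSet_Ioc (fun x _ => gaussianPDFReal_le_one x)
  simp only [setIntegral_const, smul_eq_mul, mul_one] at this
  rw [Real.volume_real_Ioc, max_eq_left (by linarith)] at this
  linarith

lemma gPhi_abs_sub (a b : ℝ) : |gPhi a - gPhi b| ≤ |a - b| := by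
  rcases le_total a b with h | h
  · have h1 : gPhi a ≤ gPhi b := by
      rw [gPhi, gPhi]
      exact ENNReal.toReal_mono (measure_ne_top _ _) (measure_mono (Set.Iic_subset_Iic.mpr h))
    rw [abs_sub_comm, abs_of_nonneg (by linarith [gPhi_lipschitz h]), abs_sub_comm,
      abs_of_nonneg (by linarith)]
    exact gPhi_lipschitz h
  · have h1 : gPhi b ≤ gPhi a := by
      rw [gPhi, gPhi]
      exact ENNReal.toReal_mono (measure_ne_top _ _) (measure_mono (Set.Iic_subset_Iic.mpr h))
    rw [abs_of_nonneg (by linarith [gPhi_lipschitz h]), abs_of_nonneg (by linarith)]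
    exact gPhi_lipschitz h

lemma gPhi_zero : gPhi 0 = 1 / 2 := by
  have heven : ∀ x : ℝ, gaussianPDFReal 0 1 (-x) = gaussianPDFReal 0 1 x := by
    intro x; rw [gaussianPDFReal, gaussianPDFReal]; ring_nf
  have h1 : ∫ x in Set.Iic (0:ℝ), gaussianPDFReal 0 1 x
      = ∫ x in Set.Ioi (0:ℝ), gaussianPDFReal 0 1 x := by
    rw [show (Set.Ioi (0:ℝ)) = Set.Ioi (-(0:ℝ)) by norm_num,
      ← integral_comp_neg_Iic (0:ℝ) (gaussianPDFReal 0 1)]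
    exact setIntegral_congr_fun measurableSet_Iic fun x _ => (heven x).symm
  have h3 : (∫ x in Set.Iic (0:ℝ), gaussianPDFReal 0 1 x)
      + ∫ x in Set.Ioi (0:ℝ), gaussianPDFReal 0 1 x = 1 := by
    rw [← integral_gaussianPDFReal_eq_one 0 one_ne_zero (v := 1)]
    rw [← setIntegral_union (Set.Iic_disjoint_Ioi le_rfl) measurableSet_Ioi
      ((integrable_gaussianPDFReal 0 1).restrict) ((integrable_gaussianPDFReal 0 1).restrict),
      Set.Iic_union_Ioi]
    simp [Measure.restrict_univ]
  rw [gPhi_eq_integral]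
  linarith [h1, h3]


lemma tilt_pointwise (s x : ℝ) :
    gaussianPDFReal 0 1 x * rexp (s*x) = rexp (s^2/2) * gaussianPDFReal s 1 x := by
  simp only [gaussianPDFReal, NNReal.coe_one, mul_one, sub_zero]
  rw [mul_assoc, ← Real.exp_add, ← mul_assoc, mul_comm (rexp (s^2/2)), mul_assoc, ← Real.exp_add]
  congr 1
  ring

lemma gaussianReal_Iic_shift (s a : ℝ) :
    gaussianReal s 1 (Set.Iic a) = gaussianReal 0 1 (Set.Iic (a - s)) := by
  have h := gaussianReal_map_add_const (μ := 0) (v := 1) s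
  rw [zero_add] at h
  rw [← h, Measure.map_apply (measurable_add_const s) measurableSet_Iic]
  congr 1
  ext x
  simp [le_sub_iff_add_le]

lemma gaussianPDF_eq_coe : gaussianPDF 0 1
    = fun x => ((Real.toNNReal (gaussianPDFReal 0 1 x) : ℝ≥0) : ℝ≥0∞) := rfl

lemma tilt_setIntegral (s a : ℝ) :
    ∫ x in Set.Iic a, rexp (s*x) ∂(gaussianReal 0 1)
      = rexp (s^2/2) * ((gaussianReal 0 1) (Set.Iic (a - s))).toReal := by
  conv_lhs => rw [gaussianReal_of_var_ne_zero 0 one_ne_zero, gaussianPDF_eq_coe]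
  rw [setIntegral_withDensity_eq_setIntegral_smul
      ((measurable_gaussianPDFReal 0 1).real_toNNReal) _ measurableSet_Iic]
  have hpt : ∀ x : ℝ, (Real.toNNReal (gaussianPDFReal 0 1 x) : ℝ≥0) • rexp (s*x)
      = rexp (s^2/2) * gaussianPDFReal s 1 x := by
    intro x
    rw [NNReal.smul_def, Real.coe_toNNReal _ (gaussianPDFReal_nonneg 0 1 x), smul_eq_mul,
      tilt_pointwise]
  rw [setIntegral_congr_fun measurableSet_Iic (fun x _ => hpt x), integral_const_mul,
    ← gaussianReal_Iic_shift s a, gaussianReal_apply_eq_integral s one_ne_zero,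
    ENNReal.toReal_ofReal
      (setIntegral_nonneg measurableSet_Iic fun x _ => gaussianPDFReal_nonneg _ _ _)]

lemma tilt_integrable (s : ℝ) : Integrable (fun x => rexp (s*x)) (gaussianReal 0 1) := by
  rw [gaussianReal_of_var_ne_zero 0 one_ne_zero, gaussianPDF_eq_coe,
    integrable_withDensity_iff_integrable_smul
      ((measurable_gaussianPDFReal 0 1).real_toNNReal)]
  have : (fun x : ℝ => (Real.toNNReal (gaussianPDFReal 0 1 x) : ℝ≥0) • rexp (s*x))
      = fun x => rexp (s^2/2) * gaussianPDFReal s 1 x := by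
    funext x
    rw [NNReal.smul_def, Real.coe_toNNReal _ (gaussianPDFReal_nonneg 0 1 x), smul_eq_mul,
      tilt_pointwise]
  rw [this]
  exact (integrable_gaussianPDFReal s 1).const_mul _


lemma tilt_gPhi (s a : ℝ) :
    ∫ x in Set.Iic a, rexp (s*x) ∂(gaussianReal 0 1) = rexp (s^2/2) * gPhi (a - s) :=
  tilt_setIntegral s a

noncomputable def gA (β : ℝ) (t : ℕ → ℝ) (N : ℕ) : ℝ :=
  Real.log ((2:ℝ)^((N:ℝ)/2) / t N * rexp (N*β^2) + rexp (N*β^2/2)) / (β * Real.sqrt N)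

lemma exp_coef (u v : ℝ) : (rexp u)⁻¹ * (rexp u)⁻¹ * rexp v = rexp (v - 2*u) := by
  rw [← Real.exp_neg, ← Real.exp_add, ← Real.exp_add]
  congr 1
  ring

lemma key_eq {Ω : Type*} [MeasureSpace Ω] [IsProbabilityMeasure (ℙ : Measure Ω)]
    (β : ℝ) (hβ : 0 < β) (t : ℕ → ℝ) (X : Ω → ℝ)
    (hlaw : Measure.map X ℙ = gaussianReal 0 1) (N : ℕ) (hN : 1 ≤ N) (htN : 0 < t N) :
    ∫ ω, (if (rexp (β * Real.sqrt N * X ω) - rexp (N*β^2/2))/rexp (N*β^2)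
          ≤ (2:ℝ)^((N:ℝ)/2)/t N
        then (rexp (β * Real.sqrt N * X ω) - rexp (N*β^2/2))/rexp (N*β^2) else 0)^2
    = gPhi (gA β t N - 2*(β*Real.sqrt N))
      - 2*rexp (-(N*β^2))*gPhi (gA β t N - β*Real.sqrt N)
      + rexp (-(N*β^2))*gPhi (gA β t N) := by
  have hXm : AEMeasurable X ℙ := aemeasurable_of_map_neZero (by rw [hlaw]; infer_instance)
  set s : ℝ := β * Real.sqrt N with hs_def
  have hsqrtN : (0:ℝ) < Real.sqrt N := Real.sqrt_pos.mpr (by exact_mod_cast hN)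
  have hs : 0 < s := mul_pos hβ hsqrtN
  have hs2 : s^2 = N*β^2 := by
    rw [hs_def, mul_pow, Real.sq_sqrt (Nat.cast_nonneg N)]; ring
  set A : ℝ := rexp (N*β^2/2) with hA_def
  set B : ℝ := rexp (N*β^2) with hB_def
  have hB : 0 < B := Real.exp_pos _
  set c : ℝ := (2:ℝ)^((N:ℝ)/2)/t N with hc_def
  have hc : 0 < c := div_pos (Real.rpow_pos_of_pos two_pos _) htN
  set R : ℝ := c * B + A with hR_def
  have hR : 0 < R := by positivity
  set a : ℝ := gA β t N with ha_def
  have ha : a = Real.log R / s := by rw [ha_def, gA]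
  set g : ℝ → ℝ := fun x => (rexp (s*x) - A)/B with hg_def
  have hgm : Measurable g := by
    apply Measurable.div_const
    exact (Real.measurable_exp.comp (measurable_id.const_mul s)).sub measurable_const
  set F : ℝ → ℝ := fun x => (if g x ≤ c then g x else 0)^2 with hF_def
  have hFm : Measurable F :=
    (Measurable.ite (measurableSet_le hgm measurable_const) hgm measurable_const).pow_const 2
  -- step 1: transfer to gaussian
  have step1 : ∫ ω, (if g (X ω) ≤ c then g (X ω) else 0)^2 ∂ℙ
      = ∫ x, F x ∂(gaussianReal 0 1) := by
    rw [← hlaw, integral_map hXm (by rw [hlaw]; exact hFm.aestronglyMeasurable)]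
  -- step 2: truncation set
  have claim1 : ∀ x : ℝ, g x ≤ c ↔ x ≤ a := by
    intro x
    rw [hg_def]
    rw [div_le_iff₀ hB, sub_le_iff_le_add, ha]
    rw [show rexp (s*x) ≤ c * B + A ↔ rexp (s*x) ≤ R from Iff.rfl]
    rw [← Real.exp_log hR, Real.exp_le_exp, Real.exp_log hR, le_div_iff₀ hs, mul_comm]
  have step2 : ∫ x, F x ∂(gaussianReal 0 1)
      = ∫ x in Set.Iic a, (g x)^2 ∂(gaussianReal 0 1) := by
    rw [← integral_indicator measurableSet_Iic]
    congr 1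
    funext x
    show (if g x ≤ c then g x else 0)^2 = _
    by_cases h : g x ≤ c
    · rw [if_pos h]
      exact (Set.indicator_of_mem (show x ∈ Set.Iic a from (claim1 x).mp h) (fun y => g y ^ 2)).symm
    · rw [if_neg h, show (0:ℝ)^2 = 0 by norm_num]
      exact (Set.indicator_of_notMem (show x ∉ Set.Iic a from fun hx => h ((claim1 x).mpr hx)) (fun y => g y ^ 2)).symm
  -- step 3: expand square
  have h4 : ∀ x : ℝ, (g x)^2
      = B⁻¹*B⁻¹ * rexp (2*s*x) - 2*A*(B⁻¹*B⁻¹) * rexp (s*x) + A*A*(B⁻¹*B⁻¹) * rexp (0*x) := by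
    intro x
    rw [hg_def, show (2:ℝ)*s*x = s*x + s*x by ring, Real.exp_add, zero_mul, Real.exp_zero]
    field_simp
    ring
  have int1 : Integrable (fun x => B⁻¹*B⁻¹ * rexp (2*s*x))
      ((gaussianReal 0 1).restrict (Set.Iic a)) :=
    (((tilt_integrable (2*s)).restrict).const_mul _).congr (by
      filter_upwards with x using by rw [mul_assoc 2 s x])
  have int2 : Integrable (fun x => 2*A*(B⁻¹*B⁻¹) * rexp (s*x))
      ((gaussianReal 0 1).restrict (Set.Iic a)) := ((tilt_integrable s).restrict).const_mul _
  have int3 : Integrable (fun x => A*A*(B⁻¹*B⁻¹) * rexp (0*x))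
      ((gaussianReal 0 1).restrict (Set.Iic a)) := ((tilt_integrable 0).restrict).const_mul _
  have step3 : ∫ x in Set.Iic a, (g x)^2 ∂(gaussianReal 0 1)
      = B⁻¹*B⁻¹ * (∫ x in Set.Iic a, rexp (2*s*x) ∂(gaussianReal 0 1))
        - 2*A*(B⁻¹*B⁻¹) * (∫ x in Set.Iic a, rexp (s*x) ∂(gaussianReal 0 1))
        + A*A*(B⁻¹*B⁻¹) * (∫ x in Set.Iic a, rexp (0*x) ∂(gaussianReal 0 1)) := by
    have int12 : Integrable (fun x => B⁻¹*B⁻¹ * rexp (2*s*x) - 2*A*(B⁻¹*B⁻¹) * rexp (s*x))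
        ((gaussianReal 0 1).restrict (Set.Iic a)) := int1.sub int2
    rw [setIntegral_congr_fun measurableSet_Iic (fun x _ => h4 x)]
    rw [integral_add int12 int3, integral_sub int1 int2,
      integral_const_mul, integral_const_mul, integral_const_mul]
  -- step 4: tilt each
  have t1 : ∫ x in Set.Iic a, rexp (2*s*x) ∂(gaussianReal 0 1)
      = rexp ((2*s)^2/2) * gPhi (a - 2*s) := by
    rw [← tilt_gPhi (2*s) a]
  have t2 := tilt_gPhi s a
  have t3 := tilt_gPhi 0 a
  rw [step1, step2, step3, t1, t2, t3]
  -- step 5: coefficients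
  have e1 : rexp ((2*s)^2/2) = B*B := by
    rw [hB_def, ← Real.exp_add]
    congr 1
    rw [mul_pow, hs2]
    ring
  have e2 : rexp (s^2/2) = rexp (N*β^2/2) := by rw [hs2]
  have e3 : rexp ((0:ℝ)^2/2) = 1 := by norm_num
  have e4 : A*A = B := by
    rw [hA_def, hB_def, ← Real.exp_add]
    congr 1
    ring
  have e5 : rexp (-(N*β^2)) = B⁻¹ := by rw [hB_def, Real.exp_neg]
  have hA0 : A ≠ 0 := by rw [hA_def]; exact (Real.exp_pos _).ne'
  rw [e1, e2, e3, e5, sub_zero, ← hA_def, ← e4]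
  field_simp


lemma gA_sub (β : ℝ) (hβ : 0 < β) (hβ2 : β^2 = Real.log 2 / 2) (t : ℕ → ℝ) (N : ℕ)
    (hN : 1 ≤ N) (htN : 0 < t N) :
    gA β t N - 2*(β*Real.sqrt N)
      = Real.log ((t N)⁻¹ + rexp (-(3*((N:ℝ)*β^2))/2)) / (β * Real.sqrt N) := by
  have hsqrtN : (0:ℝ) < Real.sqrt N := Real.sqrt_pos.mpr (by exact_mod_cast hN)
  have hs : 0 < β * Real.sqrt N := mul_pos hβ hsqrtN
  have hs2 : (β * Real.sqrt N)^2 = (N:ℝ)*β^2 := by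
    rw [mul_pow, Real.sq_sqrt (Nat.cast_nonneg N)]; ring
  have h2pow : (2:ℝ)^((N:ℝ)/2) = rexp ((N:ℝ)*β^2) := by
    rw [Real.rpow_def_of_pos two_pos]
    congr 1
    rw [hβ2]; ring
  have hu0 : 0 < (t N)⁻¹ + rexp (-(3*((N:ℝ)*β^2))/2) :=
    add_pos (inv_pos.mpr htN) (Real.exp_pos _)
  have hR : (2:ℝ)^((N:ℝ)/2) / t N * rexp ((N:ℝ)*β^2) + rexp ((N:ℝ)*β^2/2)
      = rexp (2*((N:ℝ)*β^2)) * ((t N)⁻¹ + rexp (-(3*((N:ℝ)*β^2))/2)) := by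
    rw [h2pow, div_mul_eq_mul_div, ← Real.exp_add, mul_add, ← Real.exp_add]
    rw [show (N:ℝ)*β^2 + (N:ℝ)*β^2 = 2*((N:ℝ)*β^2) by ring,
      show 2*((N:ℝ)*β^2) + -(3*((N:ℝ)*β^2))/2 = (N:ℝ)*β^2/2 by ring, div_eq_mul_inv]
  rw [gA, hR, Real.log_mul (Real.exp_pos _).ne' hu0.ne', Real.log_exp]
  rw [eq_div_iff hs.ne', sub_mul, div_mul_cancel₀ _ hs.ne',
    show 2*(β*Real.sqrt N)*(β*Real.sqrt N) = 2*(β*Real.sqrt N)^2 by ring, hs2]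
  ring

theorem truncated_second_moment_critical
    {Ω : Type*} [MeasureSpace Ω] [IsProbabilityMeasure (ℙ : Measure Ω)]
    (β : ℝ) (hβ : 0 < β) (hβ' : β = Real.sqrt (Real.log 2 / 2))
    (t : ℕ → ℝ) (ht : Tendsto t atTop atTop)
    (ho : t =o[atTop] (fun N : ℕ => Real.sqrt (Real.log N)))
    (X : Ω → ℝ) (hlaw : Measure.map X ℙ = gaussianReal 0 1)
    (Y : ℕ → Ω → ℝ)
    (hY : ∀ N ω, Y N ω =
      (Real.exp (β * Real.sqrt N * X ω) - Real.exp (N * β ^ 2 / 2)) / Real.exp (N * β ^ 2))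
    (Yt : ℕ → Ω → ℝ)
    (hYt : ∀ N ω, Yt N ω =
      if Y N ω ≤ (2 : ℝ) ^ ((N : ℝ) / 2) / t N then Y N ω else 0) :
    Tendsto (fun N : ℕ => ∫ ω, (Yt N ω) ^ 2) atTop (nhds (1 / 2)) := by
  have hβ2 : β^2 = Real.log 2 / 2 := by
    rw [hβ']
    exact Real.sq_sqrt (by positivity)
  have hβ2pos : 0 < β^2 := pow_pos hβ 2
  set G : ℕ → ℝ := fun N => gPhi (gA β t N - 2*(β*Real.sqrt N))
      - 2*rexp (-((N:ℝ)*β^2))*gPhi (gA β t N - β*Real.sqrt N)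
      + rexp (-((N:ℝ)*β^2))*gPhi (gA β t N) with hG
  -- eventual equality
  have hEq : (fun N : ℕ => ∫ ω, (Yt N ω) ^ 2) =ᶠ[atTop] G := by
    filter_upwards [eventually_ge_atTop 1, ht.eventually_ge_atTop 1] with N hN htN
    have h0 : ∫ ω, (Yt N ω) ^ 2
        = ∫ ω, (if (rexp (β * Real.sqrt N * X ω) - rexp (N*β^2/2))/rexp (N*β^2)
          ≤ (2:ℝ)^((N:ℝ)/2)/t N
        then (rexp (β * Real.sqrt N * X ω) - rexp (N*β^2/2))/rexp (N*β^2) else 0)^2 := by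
      simp only [hYt, hY]
    rw [h0, key_eq β hβ t X hlaw N hN (lt_of_lt_of_le one_pos htN)]
  -- exp decay
  have hNtend : Tendsto (fun N : ℕ => (N:ℝ)*β^2) atTop atTop :=
    Tendsto.atTop_mul_const hβ2pos tendsto_natCast_atTop_atTop
  have hexp0 : Tendsto (fun N : ℕ => rexp (-((N:ℝ)*β^2))) atTop (nhds 0) :=
    Real.tendsto_exp_atBot.comp (tendsto_neg_atTop_atBot.comp hNtend)
  have hexp32 : Tendsto (fun N : ℕ => rexp (-(3*((N:ℝ)*β^2))/2)) atTop (nhds 0) := by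
    apply Real.tendsto_exp_atBot.comp
    exact ((Tendsto.atTop_mul_const_of_neg (show (-3/2:ℝ) < 0 by norm_num) hNtend)).congr (fun N => by ring)
  -- epsilon tends to zero
  have hlogdiv : Tendsto (fun N : ℕ => Real.log N / Real.sqrt N) atTop (nhds 0) := by
    have h := (isLittleO_log_rpow_atTop one_half_pos).tendsto_div_nhds_zero
    have h2 : Tendsto (fun x : ℝ => Real.log x / Real.sqrt x) atTop (nhds 0) := by
      apply h.congr'
      filter_upwards [eventually_ge_atTop (0:ℝ)] with x hx
      rw [Real.sqrt_eq_rpow]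
    exact h2.comp tendsto_natCast_atTop_atTop
  have heps : Tendsto (fun N : ℕ => gA β t N - 2*(β*Real.sqrt N)) atTop (nhds 0) := by
    apply squeeze_zero_norm' (a := fun N : ℕ => β⁻¹ * (Real.log N / Real.sqrt N))
    · filter_upwards [eventually_ge_atTop 1, ht.eventually_ge_atTop 2,
        ho.bound one_pos, hexp32.eventually_le_const (show (0:ℝ) < 1/2 by norm_num)]
        with N hN ht2 hto hhalf
      have htN : 0 < t N := by linarith
      have hsqrtN : (0:ℝ) < Real.sqrt N := Real.sqrt_pos.mpr (by exact_mod_cast hN)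
      have hs : 0 < β * Real.sqrt N := mul_pos hβ hsqrtN
      rw [gA_sub β hβ hβ2 t N hN htN]
      set u : ℝ := (t N)⁻¹ + rexp (-(3*((N:ℝ)*β^2))/2) with hu_def
      have hu0 : 0 < u := add_pos (inv_pos.mpr htN) (Real.exp_pos _)
      have hu1 : u ≤ 1 := by
        have hinv : (t N)⁻¹ ≤ 2⁻¹ := by
          apply inv_anti₀ (by norm_num) ht2
        rw [hu_def]
        norm_num at hinv ⊢
        linarith
      have hlogu_le : Real.log u ≤ 0 := Real.log_nonpos hu0.le hu1
      have hlogu_ge : -Real.log (t N) ≤ Real.log u := by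
        rw [← Real.log_inv]
        exact Real.log_le_log (inv_pos.mpr htN) (le_add_of_nonneg_right (Real.exp_pos _).le)
      have hlt : Real.log (t N) ≤ Real.log N := by
        apply Real.log_le_log htN
        have h1 : t N ≤ Real.sqrt (Real.log N) := by
          have := hto
          rw [Real.norm_eq_abs, Real.norm_eq_abs, one_mul,
            abs_of_nonneg (Real.sqrt_nonneg _)] at this
          exact (le_abs_self _).trans this
        have h2 : Real.sqrt (Real.log N) ≤ (N:ℝ) := by
          have hNpos : (0:ℝ) < N := by exact_mod_cast hN
          have hN1 : (1:ℝ) ≤ N := by exact_mod_cast hN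
          have hlogN : Real.log N ≤ (N:ℝ)^2 := by
            nlinarith [Real.log_le_sub_one_of_pos hNpos]
          calc Real.sqrt (Real.log N) ≤ Real.sqrt ((N:ℝ)^2) := Real.sqrt_le_sqrt hlogN
            _ = (N:ℝ) := Real.sqrt_sq (Nat.cast_nonneg N)
        linarith
      have habs : |Real.log u| ≤ Real.log N := by
        rw [abs_of_nonpos hlogu_le]
        have : Real.log (t N) ≥ 0 := Real.log_nonneg (by linarith)
        linarith
      rw [Real.norm_eq_abs, abs_div, abs_of_pos hs]
      have hd : |Real.log u| / (β * Real.sqrt N) ≤ Real.log N / (β * Real.sqrt N) := by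
        gcongr
      have hrw : β⁻¹ * (Real.log N / Real.sqrt N) = Real.log N / (β * Real.sqrt N) := by
        field_simp
      rw [hrw]
      exact hd
    · have := hlogdiv.const_mul β⁻¹
      rwa [mul_zero] at this
  -- main pieces
  have h1 : Tendsto (fun N : ℕ => gPhi (gA β t N - 2*(β*Real.sqrt N))) atTop (nhds (1/2)) := by
    have hd : Tendsto (fun N : ℕ => gPhi (gA β t N - 2*(β*Real.sqrt N)) - gPhi 0)
        atTop (nhds 0) := by
      apply squeeze_zero_norm (a := fun N : ℕ => ‖gA β t N - 2*(β*Real.sqrt N)‖)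
      · intro N
        rw [Real.norm_eq_abs, Real.norm_eq_abs]
        calc |gPhi (gA β t N - 2*(β*Real.sqrt N)) - gPhi 0|
            ≤ |(gA β t N - 2*(β*Real.sqrt N)) - 0| := gPhi_abs_sub _ _
          _ = |gA β t N - 2*(β*Real.sqrt N)| := by rw [sub_zero]
      · have := heps.norm
        rwa [norm_zero] at this
    have := hd.add (tendsto_const_nhds (x := gPhi 0))
    rw [zero_add] at this
    simp only [sub_add_cancel] at this
    rwa [gPhi_zero] at this
  have h2 : Tendsto (fun N : ℕ => 2*rexp (-((N:ℝ)*β^2))*gPhi (gA β t N - β*Real.sqrt N))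
      atTop (nhds 0) := by
    apply squeeze_zero_norm (a := fun N : ℕ => 2*rexp (-((N:ℝ)*β^2)))
    · intro N
      rw [Real.norm_eq_abs, abs_of_nonneg (by
        have := gPhi_nonneg (gA β t N - β*Real.sqrt N)
        positivity)]
      exact mul_le_of_le_one_right (by positivity) (gPhi_le_one _)
    · have := hexp0.const_mul (2:ℝ)
      rwa [mul_zero] at this
  have h3 : Tendsto (fun N : ℕ => rexp (-((N:ℝ)*β^2))*gPhi (gA β t N)) atTop (nhds 0) := by
    apply squeeze_zero_norm (a := fun N : ℕ => rexp (-((N:ℝ)*β^2)))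
    · intro N
      rw [Real.norm_eq_abs, abs_of_nonneg (by
        have := gPhi_nonneg (gA β t N)
        positivity)]
      exact mul_le_of_le_one_right (by positivity) (gPhi_le_one _)
    · exact hexp0
  have hG' : Tendsto G atTop (nhds (1/2 - 0 + 0)) := (h1.sub h2).add h3
  rw [show (1/2 - 0 + 0 : ℝ) = 1/2 by norm_num] at hG'
  exact hG'.congr' hEq.symm
end
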